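/- Let d be a positive integer and ε a positive real number. Then the set of pairs (n, m), where n ∈ ℤ³ is a primitive vector and m is an integer with 1 ≤ m ≤ d, such that the set {v ∈ ℝ³ : v₁ ≥ 0, v₂ ≥ 0, v₃ ≥ 0 and ⟨n, v⟩ ≤ m} is bounded, contains the dilated tetrahedron ε·T (where T is the convex hull of 0, e₁, e₂, e₃), and such that the set {v ∈ ℝ³ : v₁ ≥ 0, v₂ ≥ 0, v₃ ≥ 0 and ⟨n, v⟩ > m} is nonempty, is finite. -/

import Mathlib

/-!
A vector `n` whose lower region `{v ≥ 0 | ⟨n, v⟩ ≤ m}` is bounded with `m ≥ 0` has positive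
coordinates, since otherwise it contains a coordinate ray. If moreover the region contains `ε • T`,
then testing `ε • eᵢ` gives `ε nᵢ ≤ m ≤ d`. So every pair lies in the finite box
`[1, ⌈d / ε⌉]³ × [1, d]`.
-/

open Pointwise

/-- The unit coordinate tetrahedron in `ℝ³`: the convex hull of the origin and the
three standard basis vectors. -/
def unitTetra : Set (Fin 3 → ℝ) :=
  convexHull ℝ ({0, Pi.single 0 1, Pi.single 1 1, Pi.single 2 1} : Set (Fin 3 → ℝ))

section LowerRegion

variable {ι : Type*} [Fintype ι] [DecidableEq ι]

def lowerRegion (a : ι → ℝ) (c : ℝ) : Set (ι → ℝ) :=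
  {v | (∀ i, 0 ≤ v i) ∧ ∑ i, a i * v i ≤ c}

lemma sum_mul_single (a : ι → ℝ) (i : ι) (t : ℝ) :
    ∑ j, a j * (Pi.single i t : ι → ℝ) j = a i * t := by
  simp [Pi.single_apply]

lemma single_mem_lowerRegion_iff {a : ι → ℝ} {c t : ℝ} (i : ι) (ht : 0 ≤ t) :
    Pi.single i t ∈ lowerRegion a c ↔ a i * t ≤ c := by
  refine ⟨fun h => sum_mul_single a i t ▸ h.2, fun h => ⟨fun j => ?_, sum_mul_single a i t ▸ h⟩⟩
  rcases eq_or_ne j i with rfl | hji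
  · simpa using ht
  · simp [hji]

lemma pos_of_isBounded_lowerRegion {a : ι → ℝ} {c : ℝ} (hc : 0 ≤ c)
    (hbdd : Bornology.IsBounded (lowerRegion a c)) (i : ι) : 0 < a i := by
  by_contra! hai
  obtain ⟨C, hC⟩ := isBounded_iff_forall_norm_le.1 hbdd
  have ht : 0 ≤ |C| + 1 := by positivity
  have hmem : Pi.single i (|C| + 1) ∈ lowerRegion a c :=
    (single_mem_lowerRegion_iff i ht).2 (by nlinarith)
  have hnorm := hC _ hmem
  rw [Pi.norm_single, Real.norm_of_nonneg ht] at hnorm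
  linarith [le_abs_self C]

lemma mul_le_of_smul_single_mem_lowerRegion {a : ι → ℝ} {c ε : ℝ} (hε : 0 ≤ ε) (i : ι)
    (h : ε • (Pi.single i 1 : ι → ℝ) ∈ lowerRegion a c) : a i * ε ≤ c := by
  rw [← Pi.single_smul, smul_eq_mul, mul_one] at h
  exact (single_mem_lowerRegion_iff i hε).1 h

end LowerRegion

lemma single_mem_unitTetra (i : Fin 3) : (Pi.single i 1 : Fin 3 → ℝ) ∈ unitTetra :=
  subset_convexHull ℝ _ (by fin_cases i <;> simp)

theorem stmt7_general (d : ℕ) (ε : ℝ) (hε : 0 < ε) :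
    {nm : (Fin 3 → ℤ) × ℤ |
      Int.gcd (Int.gcd (nm.1 0) (nm.1 1)) (nm.1 2) = 1 ∧
      1 ≤ nm.2 ∧ nm.2 ≤ (d : ℤ) ∧
      Bornology.IsBounded
        {v : Fin 3 → ℝ | (∀ i, 0 ≤ v i) ∧ ∑ i, (nm.1 i : ℝ) * v i ≤ (nm.2 : ℝ)} ∧
      ε • unitTetra ⊆
        {v : Fin 3 → ℝ | (∀ i, 0 ≤ v i) ∧ ∑ i, (nm.1 i : ℝ) * v i ≤ (nm.2 : ℝ)} ∧
      {v : Fin 3 → ℝ | (∀ i, 0 ≤ v i) ∧ (nm.2 : ℝ) < ∑ i, (nm.1 i : ℝ) * v i}.Nonempty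
      }.Finite := by
  refine ((Set.finite_Icc (fun _ : Fin 3 => (1 : ℤ)) fun _ => ⌈(d : ℝ) / ε⌉).prod
    (Set.finite_Icc 1 (d : ℤ))).subset ?_
  rintro ⟨n, m⟩ ⟨-, hm1, hmd, hbdd, hsub, -⟩
  have hm1' : (1 : ℝ) ≤ m := by exact_mod_cast hm1
  have hmd' : (m : ℝ) ≤ d := by exact_mod_cast hmd
  refine ⟨⟨fun i => ?_, fun i => ?_⟩, hm1, hmd⟩
  · exact_mod_cast pos_of_isBounded_lowerRegion (by linarith) hbdd i
  · have hle := mul_le_of_smul_single_mem_lowerRegion hε.le i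
      (hsub (Set.smul_mem_smul_set (single_mem_unitTetra i)))
    have hni : (n i : ℝ) ≤ d / ε := (le_div_iff₀ hε).2 (hle.trans hmd')
    exact_mod_cast hni.trans (Int.le_ceil _)

theorem stmt7 (d : ℕ) (hd : 0 < d) (ε : ℝ) (hε : 0 < ε) :
    {nm : (Fin 3 → ℤ) × ℤ |
      Int.gcd (Int.gcd (nm.1 0) (nm.1 1)) (nm.1 2) = 1 ∧
      1 ≤ nm.2 ∧ nm.2 ≤ (d : ℤ) ∧
      Bornology.IsBounded
        {v : Fin 3 → ℝ | (∀ i, 0 ≤ v i) ∧ ∑ i, (nm.1 i : ℝ) * v i ≤ (nm.2 : ℝ)} ∧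
      ε • unitTetra ⊆
        {v : Fin 3 → ℝ | (∀ i, 0 ≤ v i) ∧ ∑ i, (nm.1 i : ℝ) * v i ≤ (nm.2 : ℝ)} ∧
      {v : Fin 3 → ℝ | (∀ i, 0 ≤ v i) ∧ (nm.2 : ℝ) < ∑ i, (nm.1 i : ℝ) * v i}.Nonempty
      }.Finite :=
  stmt7_general d ε hε
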